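/- arXiv:2501.13626 — 2 statements merged into one kernel-verified Lean document; each statement's English description precedes it below -/
import Mathlib

section
/- If (a_n) is a strongly non density lifting invariant (strongly non dli) arithmetic sequence, then t^s_{(d_n)}(T) = t_{(d_n)}(T). -/
/-!
Suppose `d n • x → 0` statistically but `ε ≤ ‖d n • x‖` for infinitely many `n`. The terms of `d`
with indices in `[n_k - 1, n_{k+1})` are the `r * a k` with `1 ≤ r ≤ b (k+1)`, so infinitely many
blocks contain an `r` with `ε ≤ ‖r • a k • x‖`. Since `‖s • y‖ ≤ ‖r • y‖ + ‖|r - s| • y‖`, a third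
of all `r ≤ b (k+1)` then satisfy `ε / 2 ≤ ‖r • a k • x‖`. Strong non-dli forces
`n_k = O(b (k+1))`: otherwise the lift of a sparse set of short blocks has density zero. Hence these
blocks fill a fixed proportion of `[0, n_{k+1})`, which contradicts statistical convergence.
-/

open Filter Topology Set

noncomputable section

/-- The sequence of ratios `b n = a n / a (n-1)` of an arithmetic sequence. -/
def ratios (a : ℕ → ℕ) (n : ℕ) : ℕ := a n / a (n - 1)

/-- An arithmetic sequence: `a 0 = 1`, strictly increasing, each term divides the next. -/
def IsArithSeq (a : ℕ → ℕ) : Prop :=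
  a 0 = 1 ∧ (∀ n, a n < a (n + 1)) ∧ (∀ n, a n ∣ a (n + 1))

/-- The indices `n_k` with `a k = d (n k)`: `n 0 = 1`, `n (k+1) = n k + (b (k+1) - 1)`. -/
def nseq (a : ℕ → ℕ) : ℕ → ℕ
  | 0 => 1
  | k + 1 => nseq a k + (ratios a (k + 1) - 1)

/-- The lifting function `L(A) = ⋃_{k ∈ A} [n_{k-1}, n_k - 1]`. -/
def liftSet (a : ℕ → ℕ) (A : Set ℕ) : Set ℕ :=
  ⋃ k ∈ A, Set.Icc (nseq a (k - 1)) (nseq a k - 1)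

/-- `A ⊆ ℕ` has natural density `δ`. -/
def HasDensity (A : Set ℕ) (δ : ℝ) : Prop :=
  Tendsto (fun n : ℕ => ((A ∩ Set.Iio n).ncard : ℝ) / n) atTop (𝓝 δ)

/-- The upper natural density of `A ⊆ ℕ`. -/
def upperDensity (A : Set ℕ) : ℝ :=
  limsup (fun n : ℕ => ((A ∩ Set.Iio n).ncard : ℝ) / n) atTop

/-- The sequence `(d n)`: the increasing enumeration of `{r * a k : k ≥ 0, 1 ≤ r < b (k+1)}`. -/
def dSeq (a : ℕ → ℕ) : ℕ → ℕ :=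
  Nat.nth (fun m => ∃ k r : ℕ, 1 ≤ r ∧ r < ratios a (k + 1) ∧ m = r * a k)

/-- The characterized subgroup `t_{(u n)}(𝕋)`. -/
def charSub (u : ℕ → ℤ) : Set (AddCircle (1 : ℝ)) :=
  {x | Tendsto (fun n => u n • x) atTop (𝓝 0)}

/-- The statistically characterized subgroup `t^s_{(u n)}(𝕋)`. -/
def statChar (u : ℕ → ℤ) : Set (AddCircle (1 : ℝ)) :=
  {x | ∀ ε : ℝ, 0 < ε → HasDensity {n : ℕ | ε ≤ ‖u n • x‖} 0}

/-- Density lifting invariant. -/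
def Dli (a : ℕ → ℕ) : Prop :=
  ∀ A : Set ℕ, A.Infinite → HasDensity A 0 → HasDensity (liftSet a A) 0

/-- Weakly density lifting invariant. -/
def WeaklyDli (a : ℕ → ℕ) : Prop :=
  ∃ A : Set ℕ, A.Infinite ∧ ∀ m : ℕ, HasDensity (liftSet a ((fun x => x - m) '' A)) 0

/-- Strongly non density lifting invariant. -/
def StronglyNonDli (a : ℕ → ℕ) : Prop :=
  ∀ A : Set ℕ, A.Infinite → 0 < upperDensity (liftSet a A)

section ArithSeq

variable {a : ℕ → ℕ}

theorem IsArithSeq.strictMono (ha : IsArithSeq a) : StrictMono a :=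
  strictMono_nat_of_lt_succ ha.2.1

theorem IsArithSeq.pos (ha : IsArithSeq a) (k : ℕ) : 0 < a k :=
  Nat.one_pos.trans_le (by simpa [ha.1] using ha.strictMono.monotone k.zero_le)

theorem IsArithSeq.ratios_mul (ha : IsArithSeq a) (k : ℕ) : ratios a (k + 1) * a k = a (k + 1) :=
  Nat.div_mul_cancel (ha.2.2 k)

theorem IsArithSeq.two_le_ratios (ha : IsArithSeq a) (k : ℕ) : 2 ≤ ratios a (k + 1) := by
  have h := ha.2.1 k
  rw [← ha.ratios_mul k] at h
  exact Nat.lt_of_mul_lt_mul_right (a := a k) (by simpa using h)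

theorem nseq_succ (k : ℕ) : nseq a (k + 1) = nseq a k + (ratios a (k + 1) - 1) := rfl

theorem one_le_nseq (k : ℕ) : 1 ≤ nseq a k := by
  induction k with
  | zero => rfl
  | succ k ih => exact ih.trans (Nat.le_add_right _ _)

theorem IsArithSeq.strictMono_nseq (ha : IsArithSeq a) : StrictMono (nseq a) :=
  strictMono_nat_of_lt_succ fun k => by
    have := ha.two_le_ratios k
    rw [nseq_succ]
    omega

theorem IsArithSeq.lt_nseq (ha : IsArithSeq a) (k : ℕ) : k < nseq a k :=
  (Nat.lt_add_one k).trans_le (ha.strictMono_nseq.add_le_nat k 0)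

end ArithSeq

section Enumeration

variable {a : ℕ → ℕ}

theorem Nat.nth_eq_of_strictMono {p : ℕ → Prop} {f : ℕ → ℕ} (hf : StrictMono f)
    (hp : ∀ m, p m ↔ m ∈ range f) : Nat.nth p = f := by
  have hinf : (Set.ofPred p).Infinite := by
    convert infinite_range_of_injective hf.injective
    ext m
    exact hp m
  funext n
  refine (Nat.eq_nth_of_strictMonoOn_of_mapsTo_of_surjOn f ?_ ?_ (hf.strictMonoOn _)
    fun hfin => (hinf hfin).elim).symm
  · intro m hm
    obtain ⟨n, rfl⟩ := (hp m).mp hm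
    exact ⟨n, fun hfin => (hinf hfin).elim, rfl⟩
  · exact fun n _ => (hp (f n)).mpr ⟨n, rfl⟩

/-- One step through the terms `r * a k` of `dSeq a` in increasing order, recorded as `(k, r)`. -/
def blockStep (a : ℕ → ℕ) (p : ℕ × ℕ) : ℕ × ℕ :=
  if p.2 + 1 < ratios a (p.1 + 1) then (p.1, p.2 + 1) else (p.1 + 1, 1)

def blockPos (a : ℕ → ℕ) (n : ℕ) : ℕ × ℕ := (blockStep a)^[n] (0, 1)

theorem blockPos_succ (n : ℕ) : blockPos a (n + 1) = blockStep a (blockPos a n) :=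
  Function.iterate_succ_apply' _ _ _

theorem IsArithSeq.blockPos_mem (ha : IsArithSeq a) (n : ℕ) :
    1 ≤ (blockPos a n).2 ∧ (blockPos a n).2 < ratios a ((blockPos a n).1 + 1) := by
  induction n with
  | zero => exact ⟨le_rfl, ha.two_le_ratios 0⟩
  | succ n ih =>
    rw [blockPos_succ, blockStep]
    split_ifs with h
    · exact ⟨by omega, h⟩
    · exact ⟨le_rfl, ha.two_le_ratios _⟩

theorem blockPos_nseq_add_of_eq {k : ℕ} (hk : blockPos a (nseq a k - 1) = (k, 1)) {r : ℕ}
    (h1 : 1 ≤ r) (h2 : r < ratios a (k + 1)) : blockPos a (nseq a k + r - 2) = (k, r) := by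
  have := one_le_nseq (a := a) k
  induction r, h1 using Nat.le_induction with
  | base => rwa [show nseq a k + 1 - 2 = nseq a k - 1 by omega]
  | succ r hr ih =>
    rw [show nseq a k + (r + 1) - 2 = nseq a k + r - 2 + 1 by omega, blockPos_succ,
      ih (by omega), blockStep, if_pos h2]

theorem IsArithSeq.blockPos_nseq_sub_one (ha : IsArithSeq a) (k : ℕ) :
    blockPos a (nseq a k - 1) = (k, 1) := by
  induction k with
  | zero => rfl
  | succ k ih =>
    have hb := ha.two_le_ratios k
    have hlast := blockPos_nseq_add_of_eq ih (r := ratios a (k + 1) - 1) (by omega) (by omega)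
    have := one_le_nseq (a := a) k
    rw [show nseq a (k + 1) - 1 = nseq a k + (ratios a (k + 1) - 1) - 2 + 1 by
      rw [nseq_succ]; omega, blockPos_succ, hlast, blockStep, if_neg (by dsimp only; omega)]

theorem IsArithSeq.blockPos_nseq_add (ha : IsArithSeq a) {k r : ℕ} (h1 : 1 ≤ r)
    (h2 : r < ratios a (k + 1)) : blockPos a (nseq a k + r - 2) = (k, r) :=
  blockPos_nseq_add_of_eq (ha.blockPos_nseq_sub_one k) h1 h2

theorem IsArithSeq.strictMono_blockPos (ha : IsArithSeq a) :
    StrictMono fun n => (blockPos a n).2 * a (blockPos a n).1 :=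
  strictMono_nat_of_lt_succ fun n => by
    obtain ⟨h1, h2⟩ := ha.blockPos_mem n
    simp only [blockPos_succ, blockStep]
    generalize blockPos a n = p at h1 h2
    split_ifs
    · exact Nat.mul_lt_mul_of_pos_right (Nat.lt_succ_self _) (ha.pos _)
    · rw [one_mul, ← ha.ratios_mul]
      exact Nat.mul_lt_mul_of_pos_right h2 (ha.pos _)

theorem IsArithSeq.dSeq_eq (ha : IsArithSeq a) :
    dSeq a = fun n => (blockPos a n).2 * a (blockPos a n).1 := by
  refine Nat.nth_eq_of_strictMono ha.strictMono_blockPos fun m => ⟨?_, ?_⟩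
  · rintro ⟨k, r, h1, h2, rfl⟩
    exact ⟨nseq a k + r - 2, by simp [ha.blockPos_nseq_add h1 h2]⟩
  · rintro ⟨n, rfl⟩
    exact ⟨_, _, (ha.blockPos_mem n).1, (ha.blockPos_mem n).2, rfl⟩

-- `dSeq a` is indexed from `0`, while `nseq a k` is the position of `a k` counted from `1`.
theorem IsArithSeq.dSeq_nseq_add (ha : IsArithSeq a) {k r : ℕ} (h1 : 1 ≤ r)
    (h2 : r ≤ ratios a (k + 1)) : dSeq a (nseq a k + r - 2) = r * a k := by
  rcases h2.lt_or_eq with h2 | rfl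
  · simp [ha.dSeq_eq, ha.blockPos_nseq_add h1 h2]
  · have := one_le_nseq (a := a) k
    rw [show nseq a k + ratios a (k + 1) - 2 = nseq a (k + 1) - 1 by rw [nseq_succ]; omega,
      ha.dSeq_eq]
    simp [ha.blockPos_nseq_sub_one, ha.ratios_mul]

theorem IsArithSeq.frequently_block_of_frequently (ha : IsArithSeq a) {P : ℕ → Prop}
    (hP : ∃ᶠ n in atTop, P (dSeq a n)) :
    ∃ᶠ k in atTop, ∃ r, 1 ≤ r ∧ r < ratios a (k + 1) ∧ P (r * a k) := by
  rw [frequently_atTop] at hP ⊢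
  intro M
  obtain ⟨n, hn, hPn⟩ := hP (a M)
  obtain ⟨h1, h2⟩ := ha.blockPos_mem n
  have hd : dSeq a n = (blockPos a n).2 * a (blockPos a n).1 := by rw [ha.dSeq_eq]
  refine ⟨_, ?_, _, h1, h2, hd ▸ hPn⟩
  have : a M < a ((blockPos a n).1 + 1) := calc
    a M ≤ dSeq a n := hn.trans (ha.dSeq_eq ▸ ha.strictMono_blockPos.id_le n)
    _ < ratios a ((blockPos a n).1 + 1) * a (blockPos a n).1 :=
      hd ▸ Nat.mul_lt_mul_of_pos_right h2 (ha.pos _)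
    _ = _ := ha.ratios_mul _
  exact Nat.lt_succ_iff.mp (ha.strictMono.lt_iff_lt.mp this)

end Enumeration

section Counting

open Finset in
theorem le_three_mul_card_filter_le_norm_nsmul {G : Type*} [SeminormedAddCommGroup G] (y : G)
    {ε : ℝ} {b s : ℕ} (hsb : s ≤ b) (hs : ε ≤ ‖s • y‖) :
    b ≤ 3 * #{r ∈ Finset.Icc 1 b | ε / 2 ≤ ‖r • y‖} := by
  classical
  set S := {r ∈ Finset.Icc 1 b | ε / 2 ≤ ‖r • y‖}
  have mem_S {r m : ℕ} (hr : ‖r • y‖ < ε / 2) (hm : m ≤ b)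
      (hsm : ‖s • y‖ ≤ ‖r • y‖ + ‖m • y‖) : m ∈ S := by
    have hm0 : m ≠ 0 := by
      rintro rfl
      linarith [norm_nonneg (r • y), zero_nsmul y ▸ norm_zero (E := G)]
    simp only [S, mem_filter, Finset.mem_Icc]
    exact ⟨⟨Nat.one_le_iff_ne_zero.mpr hm0, hm⟩, by linarith⟩
  have hcover : Finset.Icc 1 b ⊆ S ∪ S.image (s + ·) ∪ S.image (s - ·) := by
    intro r hr
    by_cases hrS : r ∈ S
    · simp [hrS]
    have hr' : ‖r • y‖ < ε / 2 := by simp_all [S]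
    have hrb := (Finset.mem_Icc.mp hr).2
    rcases le_total s r with hsr | hrs
    · obtain ⟨m, rfl⟩ := Nat.exists_eq_add_of_le hsr
      have hsm : ‖s • y‖ ≤ ‖(s + m) • y‖ + ‖m • y‖ := by
        simpa [add_nsmul] using norm_le_norm_add_norm_sub ((s + m) • y) (s • y)
      exact mem_union_left _ (mem_union_right _ (mem_image_of_mem _ (mem_S hr' (by omega) hsm)))
    · obtain ⟨m, rfl⟩ := Nat.exists_eq_add_of_le hrs
      have hsm : ‖(r + m) • y‖ ≤ ‖r • y‖ + ‖m • y‖ := by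
        simpa [add_nsmul] using norm_add_le (r • y) (m • y)
      exact mem_union_right _ (mem_image.mpr ⟨m, mem_S hr' (by omega) hsm, by omega⟩)
  calc b = #(Finset.Icc 1 b) := by simp
    _ ≤ #(S ∪ S.image (s + ·) ∪ S.image (s - ·)) := card_le_card hcover
    _ ≤ #S + #S + #S := by
      grw [Finset.card_union_le, Finset.card_union_le, card_image_le, card_image_le]
    _ = 3 * #S := by ring

end Counting

theorem IsArithSeq.ratios_le_three_mul_ncard {a : ℕ → ℕ} (ha : IsArithSeq a) {G : Type*}
    [SeminormedAddCommGroup G] (x : G) {ε : ℝ} {k r : ℕ} (hr : r ≤ ratios a (k + 1))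
    (hε : ε ≤ ‖(r * a k) • x‖) :
    ratios a (k + 1) ≤ 3 * ({n | ε / 2 ≤ ‖dSeq a n • x‖} ∩ Iio (nseq a (k + 1))).ncard := by
  have hcount := le_three_mul_card_filter_le_norm_nsmul (a k • x) (ε := ε) hr
    (by rwa [← mul_nsmul'])
  refine hcount.trans (Nat.mul_le_mul_left _ ?_)
  rw [← ncard_coe_finset]
  have := one_le_nseq (a := a) k
  refine ncard_le_ncard_of_injOn (fun r => nseq a k + r - 2) ?_ ?_
    ((finite_Iio _).inter_of_right _)
  · intro r hr
    simp only [Finset.coe_filter, Finset.mem_Icc, mem_ofPred_eq] at hr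
    refine ⟨?_, ?_⟩
    · rw [mem_ofPred_eq, ha.dSeq_nseq_add hr.1.1 hr.1.2, mul_nsmul']
      exact hr.2
    · rw [mem_Iio, nseq_succ]
      omega
  · intro r hr r' hr' h
    simp only [Finset.coe_filter, Finset.mem_Icc, mem_ofPred_eq] at hr hr' h
    omega

section Density

theorem HasDensity.upperDensity_eq {A : Set ℕ} {δ : ℝ} (h : HasDensity A δ) :
    upperDensity A = δ :=
  h.limsup_eq

theorem hasDensity_zero_of_finite {A : Set ℕ} (hA : A.Finite) : HasDensity A 0 := by
  refine squeeze_zero (fun n => by positivity) (fun n => ?_)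
    (tendsto_const_div_atTop_nhds_zero_nat (A.ncard : ℝ))
  gcongr
  exact inter_subset_left

theorem HasDensity.eventually_mul_ncard_lt {B : Set ℕ} (hB : HasDensity B 0) {f : ℕ → ℕ}
    (hf : Tendsto f atTop atTop) {C : ℕ} (hC : 0 < C) :
    ∀ᶠ k in atTop, C * (B ∩ Iio (f k)).ncard < f k := by
  filter_upwards [(hB.comp hf).eventually (gt_mem_nhds (show (0 : ℝ) < 1 / C by positivity)),
    hf.eventually_gt_atTop 0] with k hk hfk
  rw [Function.comp_apply, div_lt_div_iff₀ (by exact_mod_cast hfk) (by exact_mod_cast hC)] at hk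
  exact_mod_cast (by linarith : (C : ℝ) * (B ∩ Iio (f k)).ncard < f k)

variable {S : Set ℕ} {l h : ℕ → ℕ}

/-- The intervals `[l j, h j)` that `S ∩ [0, N)` meets lie below `l J / 2 ^ J` or in
`[l J, h J)`, each of size at most `l J / 2 ^ J ≤ N / 2 ^ J`. -/
theorem pow_mul_ncard_inter_Iio_le (hS : S ⊆ ⋃ j, Ico (l j) (h j)) (hl : StrictMono l)
    (hh : Monotone h) (hlen : ∀ j, 2 ^ j * (h j - l j) ≤ l j)
    (hgap : ∀ j, 2 ^ (j + 1) * h j ≤ l (j + 1)) {J N : ℕ} (hJN : l J ≤ N)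
    (hNJ : N < l (J + 1)) : 2 ^ J * (S ∩ Iio N).ncard ≤ 2 * N := by
  cases J with
  | zero =>
    have := ncard_le_ncard (inter_subset_right (s := S)) (finite_Iio N)
    rw [ncard_Iio_nat] at this
    omega
  | succ J =>
    have hsub : S ∩ Iio N ⊆ Iio (h J) ∪ Ico (l (J + 1)) (h (J + 1)) := by
      rintro t ⟨htS, htN⟩
      obtain ⟨i, hli, hhi⟩ := mem_iUnion.mp (hS htS)
      rcases lt_trichotomy i (J + 1) with hi | rfl | hi
      · exact Or.inl (hhi.trans_le (hh (Nat.lt_succ_iff.mp hi)))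
      · exact Or.inr ⟨hli, hhi⟩
      · have := hl.monotone (show J + 1 + 1 ≤ i from hi)
        exact absurd htN (by rw [mem_Iio]; omega)
    have hcard : (S ∩ Iio N).ncard ≤ h J + (h (J + 1) - l (J + 1)) := by
      refine (ncard_le_ncard hsub ((finite_Iio _).union (finite_Ico _ _))).trans
        ((ncard_union_le _ _).trans ?_)
      simp
    calc 2 ^ (J + 1) * (S ∩ Iio N).ncard
        ≤ 2 ^ (J + 1) * h J + 2 ^ (J + 1) * (h (J + 1) - l (J + 1)) := by
          rw [← mul_add]; exact Nat.mul_le_mul_left _ hcard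
      _ ≤ l (J + 1) + l (J + 1) := Nat.add_le_add (hgap J) (hlen (J + 1))
      _ ≤ 2 * N := by omega

theorem hasDensity_zero_of_subset_iUnion_Ico (hS : S ⊆ ⋃ j, Ico (l j) (h j))
    (hl : StrictMono l) (hh : Monotone h) (hlen : ∀ j, 2 ^ j * (h j - l j) ≤ l j)
    (hgap : ∀ j, 2 ^ (j + 1) * h j ≤ l (j + 1)) : HasDensity S 0 := by
  have hbound (J : ℕ) : ∀ᶠ N in atTop, ((S ∩ Iio N).ncard : ℝ) / N ≤ 2 / 2 ^ J := by
    filter_upwards [eventually_ge_atTop (l J), eventually_gt_atTop 0] with N hN hN0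
    obtain ⟨J', hJ'N, hNJ'⟩ := hl.exists_between_of_tendsto_atTop hl.tendsto_atTop
      (x := N + 1) (by have := hl.monotone J.zero_le; omega)
    have hJJ' : J ≤ J' := Nat.lt_add_one_iff.mp (hl.lt_iff_lt.mp (by omega))
    have key := pow_mul_ncard_inter_Iio_le hS hl hh hlen hgap (Nat.lt_add_one_iff.mp hJ'N) hNJ'
    rw [div_le_div_iff₀ (by exact_mod_cast hN0) (by positivity)]
    calc ((S ∩ Iio N).ncard : ℝ) * 2 ^ J ≤ (S ∩ Iio N).ncard * 2 ^ J' := by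
          gcongr; exact one_le_two
      _ ≤ 2 * N := by rw [mul_comm]; exact_mod_cast key
  refine tendsto_order.mpr ⟨fun ε hε => Eventually.of_forall fun N => hε.trans_le
    (by positivity), fun ε hε => ?_⟩
  obtain ⟨J, hJ⟩ := pow_unbounded_of_one_lt (2 / ε) one_lt_two
  filter_upwards [hbound J] with N hN
  exact hN.trans_lt ((div_lt_iff₀ (by positivity)).mpr (by rwa [div_lt_iff₀ hε, mul_comm] at hJ))

theorem exists_seq_forall_of_frequently {P : ℕ → ℕ → Prop} (hP : ∀ j, ∃ᶠ k in atTop, P j k)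
    (B : ℕ → ℕ → ℕ) : ∃ g : ℕ → ℕ, ∀ j, P j (g j) ∧ B j (g j) ≤ g (j + 1) := by
  choose F hFB hFP using fun j M => frequently_atTop.mp (hP j) M
  refine ⟨fun j => Nat.rec (F 0 0) (fun j k => F (j + 1) (B j k)) j, fun j => ⟨?_, hFB _ _⟩⟩
  cases j <;> exact hFP _ _

end Density

section Lifting

variable {a : ℕ → ℕ}

theorem IsArithSeq.exists_hasDensity_liftSet_zero (ha : IsArithSeq a)
    (hshort : ∀ j, ∃ᶠ k in atTop, 2 ^ j * (ratios a (k + 1) - 1) ≤ nseq a k) :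
    ∃ A : Set ℕ, A.Infinite ∧ HasDensity (liftSet a A) 0 := by
  obtain ⟨g, hg⟩ := exists_seq_forall_of_frequently hshort fun j k => 2 ^ (j + 1) * nseq a (k + 1)
  have hgap (j : ℕ) : 2 ^ (j + 1) * nseq a (g j + 1) < nseq a (g (j + 1)) :=
    (hg j).2.trans_lt (ha.lt_nseq _)
  have hg_mono : StrictMono g := strictMono_nat_of_lt_succ fun j => by
    have := ha.lt_nseq (g j + 1)
    have := Nat.le_mul_of_pos_left (nseq a (g j + 1)) (Nat.two_pow_pos (j + 1))
    have := (hg j).2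
    omega
  refine ⟨range (g · + 1), infinite_range_of_injective fun i j hij => hg_mono.injective (by simpa
    using hij), hasDensity_zero_of_subset_iUnion_Ico (l := nseq a ∘ g) (h := (nseq a <| g · + 1))
    ?_ (ha.strictMono_nseq.comp hg_mono) ?_ (fun j => ?_) (fun j => (hgap j).le)⟩
  · simp only [liftSet, biUnion_range, Nat.add_sub_cancel]
    refine iUnion_mono fun j t ht => ⟨ht.1, ?_⟩
    have := one_le_nseq (a := a) (g j + 1)
    have := ht.2
    omega
  · exact fun i j hij =>
      ha.strictMono_nseq.monotone (Nat.add_le_add_right (hg_mono.monotone hij) 1)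
  · simpa [nseq_succ] using (hg j).1

theorem IsArithSeq.exists_nseq_lt_of_stronglyNonDli (ha : IsArithSeq a) (h : StronglyNonDli a) :
    ∃ j, ∀ᶠ k in atTop, nseq a k < 2 ^ j * (ratios a (k + 1) - 1) := by
  by_contra! hshort
  obtain ⟨A, hA, hdens⟩ := ha.exists_hasDensity_liftSet_zero hshort
  exact (h A hA).ne' hdens.upperDensity_eq

end Lifting

theorem charSub_subset_statChar (u : ℕ → ℤ) : charSub u ⊆ statChar u := by
  intro x hx ε hε
  obtain ⟨N, hN⟩ := eventually_atTop.mp (NormedAddGroup.tendsto_nhds_zero.mp hx ε hε)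
  exact hasDensity_zero_of_finite ((finite_Iio N).subset fun n hn =>
    lt_of_not_ge fun hNn => (hN n hNn).not_ge hn)

/-- if `(a n)` is strongly non dli then `t^s_{(d n)}(𝕋) = t_{(d n)}(𝕋)`. -/
theorem statChar_eq_charSub_of_stronglyNonDli (a : ℕ → ℕ) (ha : IsArithSeq a)
    (h : StronglyNonDli a) :
    statChar (fun n => (dSeq a n : ℤ)) = charSub (fun n => (dSeq a n : ℤ)) := by
  refine Subset.antisymm (fun x hx => ?_) (charSub_subset_statChar _)
  simp only [statChar, charSub, mem_ofPred_eq, natCast_zsmul] at hx ⊢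
  by_contra hxc
  obtain ⟨ε, hε, hfreq⟩ : ∃ ε > 0, ∃ᶠ n in atTop, ε ≤ ‖dSeq a n • x‖ := by
    simpa [NormedAddGroup.tendsto_nhds_zero, frequently_atTop] using hxc
  obtain ⟨j, hj⟩ := ha.exists_nseq_lt_of_stronglyNonDli h
  have hfew := (hx (ε / 2) (by positivity)).eventually_mul_ncard_lt
    (ha.strictMono_nseq.tendsto_atTop.comp (tendsto_add_atTop_nat 1)) (C := 3 * (2 ^ j + 1))
    (by positivity)
  obtain ⟨k, ⟨r, -, hr, hεr⟩, hk, hfew_k⟩ :=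
    ((ha.frequently_block_of_frequently (P := (ε ≤ ‖· • x‖)) hfreq).and_eventually
      (hj.and hfew)).exists
  have hcount := ha.ratios_le_three_mul_ncard x hr.le hεr
  simp only [Function.comp_apply] at hfew_k
  refine hfew_k.not_ge (calc
    nseq a (k + 1) = nseq a k + (ratios a (k + 1) - 1) := nseq_succ k
    _ ≤ (2 ^ j + 1) * (ratios a (k + 1) - 1) := by rw [add_mul, one_mul]; omega
    _ ≤ 3 * (2 ^ j + 1) * _ := by
      rw [mul_comm 3, mul_assoc]; exact Nat.mul_le_mul_left _ (by omega))
end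
end

section
/- For the arithmetic sequence a_n = 2^{n(n+1)/2}, the statistically characterized subgroup t^s_{(d_n)}(T) is countable. -/
open Filter Topology Set

noncomputable section

/-!
If `d n • x → 0` statistically, look at the block of `d` made of the `r * a (k + 1)` with
`1 ≤ r < 2 ^ (k + 2)`: it fills a fixed proportion of the indices below its end, so for large `k`
all but fewer than a quarter of the multiples `r • z` of `z = a (k + 1) • x`, `r < 2 ^ (k + 2)`, lie
within `1/16` of `0`. Any shift `j ≤ 2 ^ k` is then a difference of two such `r`, so the first
`2 ^ k` multiples of `z` stay within `1/8` of `0`, which forces `2 ^ (k + 2) * ‖z‖ < 1/2`.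
Hence `‖a (k + 2) • x‖ = 2 ^ (k + 2) * ‖a (k + 1) • x‖` doubles at every step, and since norms on
the circle are at most `1/2` it must vanish: `x` is a torsion point, and there are only countably
many of those.
-/

open scoped Finset

theorem Finset.exists_add_mem_of_card_lt {G : Finset ℕ} {n j : ℕ} (hG : G ⊆ range n)
    (h : n + j < 2 * #G) : ∃ r ∈ G, r + j ∈ G := by
  have hshift : G.map (addRightEmbedding j) ⊆ range (n + j) := by
    intro y hy
    obtain ⟨r, hr, rfl⟩ := mem_map.1 hy
    have := mem_range.1 (hG hr)
    simp only [addRightEmbedding_apply, mem_range]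
    omega
  obtain ⟨y, hy⟩ := inter_nonempty_of_card_lt_card_add_card hshift
    (hG.trans (range_subset_range.2 (Nat.le_add_right n j))) (by simpa [two_mul] using h)
  obtain ⟨hyshift, hyG⟩ := mem_inter.1 hy
  obtain ⟨r, hr, rfl⟩ := mem_map.1 hyshift
  exact ⟨r, hr, hyG⟩

namespace AddCircle

theorem countable_setOf_isOfFinAddOrder {𝕜 : Type*} [AddCommGroup 𝕜] [LinearOrder 𝕜]
    [IsOrderedAddMonoid 𝕜] (p : 𝕜) : {x : AddCircle p | IsOfFinAddOrder x}.Countable := by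
  refine (Set.countable_iUnion fun n : ℕ => (finite_torsion p n.succ_pos).countable).mono ?_
  intro x hx
  obtain ⟨n, hn, hnx⟩ := isOfFinAddOrder_iff_nsmul_eq_zero.1 hx
  exact Set.mem_iUnion.2 ⟨n - 1, show (n - 1 + 1) • x = 0 by rwa [Nat.sub_add_cancel hn]⟩

variable {p : ℝ}

theorem norm_coe_eq_abs_of_le {s : ℝ} (h : |s| ≤ |p| / 2) : ‖(s : AddCircle p)‖ = |s| := by
  rcases eq_or_ne p 0 with rfl | hp
  · exact norm_eq_of_zero
  · exact (norm_coe_eq_abs_iff p hp).2 h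

theorem exists_coe_eq_abs_eq_norm (x : AddCircle p) :
    ∃ s : ℝ, (s : AddCircle p) = x ∧ |s| = ‖x‖ := by
  induction x using QuotientAddGroup.induction_on with
  | H u =>
    refine ⟨u - round (p⁻¹ * u) * p, ?_, (norm_eq p).symm⟩
    rw [coe_sub, sub_eq_self, coe_eq_zero_iff]
    exact ⟨round (p⁻¹ * u), zsmul_eq_mul _ _⟩

theorem norm_nsmul_eq_of_mul_norm_le {x : AddCircle p} {n : ℕ} (h : n * ‖x‖ ≤ |p| / 2) :
    ‖n • x‖ = n * ‖x‖ := by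
  obtain ⟨s, rfl, hs⟩ := exists_coe_eq_abs_eq_norm x
  rw [← coe_nsmul, nsmul_eq_mul, norm_coe_eq_abs_of_le, abs_mul, Nat.abs_cast, hs]
  rwa [abs_mul, Nat.abs_cast, hs]

theorem mul_norm_lt_of_forall_norm_nsmul_lt {x : AddCircle p} {M : ℕ} {ε : ℝ} (hε0 : 0 < ε)
    (hε : ε ≤ |p| / 4) (h : ∀ j, 1 ≤ j → j ≤ M → ‖j • x‖ < ε) : M * ‖x‖ < ε := by
  induction M with
  | zero => simpa using hε0
  | succ M ih =>
    have hM := ih fun j hj1 hjM => h j hj1 (by omega)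
    have h1 : ‖x‖ < ε := by simpa using h 1 le_rfl (by omega)
    have hle : ((M + 1 : ℕ) : ℝ) * ‖x‖ ≤ |p| / 2 := by push_cast; linarith
    rw [← norm_nsmul_eq_of_mul_norm_le hle]
    exact h (M + 1) (by omega) le_rfl

theorem mul_norm_lt_of_card_filter_lt {x : AddCircle p} {M N : ℕ} {ε : ℝ} (hε0 : 0 < ε)
    (hε : ε ≤ |p| / 4) (h : M + 2 * #{r ∈ Finset.range N | ε / 2 ≤ ‖r • x‖} < N) : M * ‖x‖ < ε := by
  set G := {r ∈ Finset.range N | ¬ε / 2 ≤ ‖r • x‖}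
  have hcard : #{r ∈ Finset.range N | ε / 2 ≤ ‖r • x‖} + #G = N :=
    (Finset.card_filter_add_card_filter_not _).trans (Finset.card_range N)
  refine mul_norm_lt_of_forall_norm_nsmul_lt hε0 hε fun j _ hjM => ?_
  obtain ⟨r, hr, hrj⟩ := Finset.exists_add_mem_of_card_lt
    (Finset.filter_subset _ (Finset.range N)) (by omega : N + j < 2 * #G)
  have hr' := not_le.1 (Finset.mem_filter.1 hr).2
  have hrj' := not_le.1 (Finset.mem_filter.1 hrj).2
  calc ‖j • x‖ = ‖(r + j) • x - r • x‖ := by rw [add_nsmul, add_sub_cancel_left]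
    _ ≤ ‖(r + j) • x‖ + ‖r • x‖ := norm_sub_le _ _
    _ < ε := by linarith

end AddCircle

theorem HasDensity.eventually_ncard_lt {A : Set ℕ} (hA : HasDensity A 0) {c : ℝ} (hc : 0 < c) :
    ∀ᶠ n in atTop, ((A ∩ Iio n).ncard : ℝ) < c * n := by
  filter_upwards [hA.eventually (gt_mem_nhds hc), eventually_gt_atTop 0] with n hn hn0
  rwa [div_lt_iff₀ (by exact_mod_cast hn0)] at hn

theorem eventually_nonpos_of_two_mul_le {δ : ℕ → ℝ} (hδ : BddAbove (range δ))
    (h : ∀ᶠ k in atTop, 2 * δ k ≤ δ (k + 1)) : ∀ᶠ k in atTop, δ k ≤ 0 := by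
  obtain ⟨C, hC⟩ := hδ
  filter_upwards [eventually_forall_ge_atTop.2 h] with K hK
  have grow : ∀ j, 2 ^ j * δ K ≤ δ (K + j) := by
    intro j
    induction j with
    | zero => simp
    | succ j ih =>
      calc 2 ^ (j + 1) * δ K = 2 * (2 ^ j * δ K) := by ring
        _ ≤ 2 * δ (K + j) := by linarith
        _ ≤ δ (K + (j + 1)) := hK (K + j) (Nat.le_add_right K j)
  by_contra! hpos
  obtain ⟨j, hj⟩ := pow_unbounded_of_one_lt (C / δ K) one_lt_two
  rw [div_lt_iff₀ hpos] at hj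
  linarith [grow j, hC (mem_range_self (K + j))]

def IsDSeqTerm (a : ℕ → ℕ) (m : ℕ) : Prop :=
  ∃ k r : ℕ, 1 ≤ r ∧ r < ratios a (k + 1) ∧ m = r * a k

namespace IsArithSeq

variable {a : ℕ → ℕ}

theorem strictMono_s16 (ha : IsArithSeq a) : StrictMono a :=
  strictMono_nat_of_lt_succ ha.2.1

theorem pos_s16 (ha : IsArithSeq a) (n : ℕ) : 0 < a n :=
  Nat.one_pos.trans_le (ha.1 ▸ ha.strictMono_s16.monotone n.zero_le)

theorem ratios_mul_s16 (ha : IsArithSeq a) (k : ℕ) : ratios a (k + 1) * a k = a (k + 1) :=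
  Nat.div_mul_cancel (ha.2.2 k)

theorem one_lt_ratios (ha : IsArithSeq a) (k : ℕ) : 1 < ratios a (k + 1) := by
  have h := ha.2.1 k
  rw [← ha.ratios_mul_s16 k] at h
  exact (Nat.lt_mul_iff_one_lt_left (ha.pos_s16 k)).1 h

theorem strictMono_nseq_s16 (ha : IsArithSeq a) : StrictMono (nseq a) :=
  strictMono_nat_of_lt_succ fun k => by
    have := ha.one_lt_ratios k
    simp only [nseq]
    omega

theorem mul_mem_Ico (ha : IsArithSeq a) {k r : ℕ} (h1 : 1 ≤ r) (h2 : r < ratios a (k + 1)) :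
    r * a k ∈ Ico (a k) (a (k + 1)) :=
  ⟨Nat.le_mul_of_pos_left _ h1, ha.ratios_mul_s16 k ▸ Nat.mul_lt_mul_of_pos_right h2 (ha.pos_s16 k)⟩

theorem le_of_mem_Ico (ha : IsArithSeq a) {m j k : ℕ} (hj : m ∈ Ico (a j) (a (j + 1)))
    (hk : m ∈ Ico (a k) (a (k + 1))) : j ≤ k := by
  by_contra! h
  have := ha.strictMono_s16.monotone (by omega : k + 1 ≤ j)
  simp only [mem_Ico] at hj hk
  omega

theorem eq_mul_of_isDSeqTerm (ha : IsArithSeq a) {k m : ℕ} (hm : IsDSeqTerm a m)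
    (hmk : m ∈ Ico (a k) (a (k + 1))) : ∃ r, 1 ≤ r ∧ r < ratios a (k + 1) ∧ m = r * a k := by
  obtain ⟨j, r, h1, h2, rfl⟩ := hm
  have hj := ha.mul_mem_Ico h1 h2
  obtain rfl := le_antisymm (ha.le_of_mem_Ico hj hmk) (ha.le_of_mem_Ico hmk hj)
  exact ⟨r, h1, h2, rfl⟩

open scoped Classical in
theorem count_succ_mul (ha : IsArithSeq a) {k r : ℕ} (h1 : 1 ≤ r) (h2 : r + 1 ≤ ratios a (k + 1)) :
    Nat.count (IsDSeqTerm a) ((r + 1) * a k) = Nat.count (IsDSeqTerm a) (r * a k) + 1 := by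
  have hr : IsDSeqTerm a (r * a k) := ⟨k, r, h1, h2, rfl⟩
  rw [← Nat.count_succ_eq_succ_count_iff.2 hr]
  refine le_antisymm ?_ (Nat.count_monotone _ (by nlinarith [ha.pos_s16 k]))
  by_contra! hlt
  obtain ⟨m, hm, hmt⟩ := Nat.exists_of_count_lt_count hlt
  have hmk : m ∈ Ico (a k) (a (k + 1)) := by
    have := Nat.mul_le_mul_right (a k) h2
    rw [ha.ratios_mul_s16] at this
    simp only [mem_Ico] at hm ⊢
    constructor <;> nlinarith
  obtain ⟨s, -, -, rfl⟩ := ha.eq_mul_of_isDSeqTerm hmt hmk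
  simp only [mem_Ico] at hm
  have := Nat.lt_of_mul_lt_mul_right (a := a k) (by omega : r * a k < s * a k)
  have := Nat.lt_of_mul_lt_mul_right (a := a k) hm.2
  omega

open scoped Classical in
theorem count_mul_add_one (ha : IsArithSeq a) {k r : ℕ} (h1 : 1 ≤ r) (h2 : r ≤ ratios a (k + 1)) :
    Nat.count (IsDSeqTerm a) (r * a k) + 1 = Nat.count (IsDSeqTerm a) (a k) + r := by
  induction r, h1 using Nat.le_induction with
  | base => rw [one_mul]
  | succ r hr ih =>
    rw [ha.count_succ_mul hr h2, add_right_comm, ih (by omega), add_assoc]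

open scoped Classical in
theorem count_add_one_eq_nseq (ha : IsArithSeq a) (k : ℕ) :
    Nat.count (IsDSeqTerm a) (a k) + 1 = nseq a k := by
  induction k with
  | zero =>
    have h0 : ¬IsDSeqTerm a 0 := fun ⟨j, r, h1, _, h⟩ =>
      (Nat.mul_pos h1 (ha.pos_s16 j)).ne' h.symm
    simp [ha.1, nseq, Nat.count_one, h0]
  | succ k ih =>
    have h := ha.count_mul_add_one (le_of_lt (ha.one_lt_ratios k)) le_rfl
    rw [ha.ratios_mul_s16] at h
    have := ha.one_lt_ratios k
    simp only [nseq]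
    omega

open scoped Classical in
theorem dSeq_nseq_add_s16 (ha : IsArithSeq a) {k r : ℕ} (h1 : 1 ≤ r) (h2 : r < ratios a (k + 1)) :
    dSeq a (nseq a k + r - 2) = r * a k := by
  have := ha.count_mul_add_one h1 h2.le
  have := ha.count_add_one_eq_nseq k
  rw [show nseq a k + r - 2 = Nat.count (IsDSeqTerm a) (r * a k) by omega]
  exact Nat.nth_count ⟨k, r, h1, h2, rfl⟩

theorem card_filter_le_ncard (ha : IsArithSeq a) {p : ℝ}
    (x : AddCircle p) {ε : ℝ} (hε : 0 < ε) (k : ℕ) :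
    #{r ∈ Finset.range (ratios a (k + 1)) | ε ≤ ‖r • a k • x‖} ≤
      ({n | ε ≤ ‖dSeq a n • x‖} ∩ Iio (nseq a (k + 1))).ncard := by
  set B := {r ∈ Finset.range (ratios a (k + 1)) | ε ≤ ‖r • a k • x‖}
  have hB : ∀ r ∈ B, 1 ≤ r ∧ r < ratios a (k + 1) := by
    intro r hr
    obtain ⟨hrb, hrε⟩ := Finset.mem_filter.1 hr
    refine ⟨Nat.one_le_iff_ne_zero.2 fun h0 => ?_, Finset.mem_range.1 hrb⟩
    rw [h0, zero_smul, norm_zero] at hrε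
    exact hrε.not_gt hε
  have hn : 1 ≤ nseq a k := ha.strictMono_nseq_s16.monotone (Nat.zero_le k)
  have hinj : Set.InjOn (fun r => nseq a k + r - 2) B := fun r hr s hs hrs => by
    have := (hB r hr).1
    have := (hB s hs).1
    simp only at hrs
    omega
  have himage : (B.image fun r => nseq a k + r - 2 : Set ℕ) ⊆
      {n | ε ≤ ‖dSeq a n • x‖} ∩ Iio (nseq a (k + 1)) := by
    intro n hmem
    obtain ⟨r, hr, rfl⟩ := Finset.mem_image.1 hmem
    obtain ⟨hr1, hrb⟩ := hB r hr
    refine ⟨?_, ?_⟩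
    · show ε ≤ ‖dSeq a _ • x‖
      rw [ha.dSeq_nseq_add_s16 hr1 hrb, mul_nsmul']
      exact (Finset.mem_filter.1 hr).2
    · simp only [Set.mem_Iio, nseq]
      omega
  rw [← Finset.card_image_of_injOn hinj, ← Set.ncard_coe_finset]
  exact Set.ncard_le_ncard himage ((Set.finite_Iio _).subset Set.inter_subset_right)

end IsArithSeq

def twoPowTriangle (n : ℕ) : ℕ := 2 ^ (n * (n + 1) / 2)

theorem twoPowTriangle_succ (k : ℕ) : twoPowTriangle (k + 1) = 2 ^ (k + 1) * twoPowTriangle k := by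
  have h : (k + 1) * (k + 1 + 1) / 2 = k * (k + 1) / 2 + (k + 1) := by
    rw [show (k + 1) * (k + 1 + 1) = k * (k + 1) + (k + 1) * 2 by ring,
      Nat.add_mul_div_right _ _ two_pos]
  rw [twoPowTriangle, twoPowTriangle, h, pow_add, mul_comm]

theorem isArithSeq_twoPowTriangle : IsArithSeq twoPowTriangle := by
  refine ⟨rfl, fun k => ?_, fun k => ⟨2 ^ (k + 1), by rw [twoPowTriangle_succ, mul_comm]⟩⟩
  rw [twoPowTriangle_succ]
  exact lt_mul_left (Nat.two_pow_pos _) (Nat.one_lt_two_pow k.succ_ne_zero)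

theorem ratios_twoPowTriangle (k : ℕ) : ratios twoPowTriangle (k + 1) = 2 ^ (k + 1) := by
  rw [ratios, Nat.add_sub_cancel, twoPowTriangle_succ,
    Nat.mul_div_cancel _ (isArithSeq_twoPowTriangle.pos_s16 k)]

theorem nseq_twoPowTriangle_add (k : ℕ) : nseq twoPowTriangle k + (k + 1) = 2 ^ (k + 1) := by
  induction k with
  | zero => rfl
  | succ k ih =>
    have := Nat.one_le_two_pow (n := k + 1)
    rw [nseq, ratios_twoPowTriangle, pow_succ]
    omega

theorem eventually_two_pow_mul_norm_lt {x : AddCircle (1 : ℝ)}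
    (hx : x ∈ statChar fun n => (dSeq twoPowTriangle n : ℤ)) :
    ∀ᶠ k in atTop, 2 ^ (k + 2) * ‖twoPowTriangle (k + 1) • x‖ < 1 / 2 := by
  have hA : HasDensity {n | (1 / 16 : ℝ) ≤ ‖dSeq twoPowTriangle n • x‖} 0 := by
    simpa only [natCast_zsmul] using hx (1 / 16) (by norm_num)
  have hnseq : Tendsto (fun k => nseq twoPowTriangle (k + 2)) atTop atTop :=
    isArithSeq_twoPowTriangle.strictMono_nseq_s16.tendsto_atTop.comp (tendsto_add_atTop_nat 2)
  filter_upwards [hnseq.eventually (hA.eventually_ncard_lt (c := 1 / 8) (by norm_num))] with k hk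
  have hbad := isArithSeq_twoPowTriangle.card_filter_le_ncard x (ε := 1 / 16) (by norm_num) (k + 1)
  rw [ratios_twoPowTriangle, show k + 1 + 1 = k + 2 from rfl] at hbad
  have hnseq_le : (nseq twoPowTriangle (k + 2) : ℝ) ≤ 2 ^ (k + 3) := by
    exact_mod_cast (Nat.le_add_right _ _).trans (nseq_twoPowTriangle_add (k + 2)).le
  have hsmall : (({n | (1 / 16 : ℝ) ≤ ‖dSeq twoPowTriangle n • x‖} ∩
      Iio (nseq twoPowTriangle (k + 2))).ncard : ℝ) < 2 ^ k := by
    calc _ < 1 / 8 * (nseq twoPowTriangle (k + 2) : ℝ) := hk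
      _ ≤ 1 / 8 * 2 ^ (k + 3) := by gcongr
      _ = 2 ^ k := by ring
  have hM := AddCircle.mul_norm_lt_of_card_filter_lt (x := twoPowTriangle (k + 1) • x) (M := 2 ^ k)
    (N := 2 ^ (k + 2)) (ε := 1 / 8) (by norm_num) (by norm_num) (by
      rw [show (1 / 8 : ℝ) / 2 = 1 / 16 by norm_num]
      have := hbad.trans_lt (by exact_mod_cast hsmall)
      have : 2 ^ (k + 2) = 4 * 2 ^ k := by ring
      omega)
  push_cast at hM
  calc (2 : ℝ) ^ (k + 2) * ‖twoPowTriangle (k + 1) • x‖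
      = 4 * (2 ^ k * ‖twoPowTriangle (k + 1) • x‖) := by ring
    _ < 1 / 2 := by linarith

theorem eventually_twoPowTriangle_nsmul_eq_zero {x : AddCircle (1 : ℝ)}
    (hx : x ∈ statChar fun n => (dSeq twoPowTriangle n : ℤ)) :
    ∀ᶠ k in atTop, twoPowTriangle (k + 1) • x = 0 := by
  set δ : ℕ → ℝ := fun k => ‖twoPowTriangle (k + 1) • x‖
  have hbdd : BddAbove (range δ) :=
    ⟨|1| / 2, forall_mem_range.2 fun k => AddCircle.norm_le_half_period 1 one_ne_zero⟩
  have hgrow : ∀ᶠ k in atTop, 2 * δ k ≤ δ (k + 1) := by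
    filter_upwards [eventually_two_pow_mul_norm_lt hx] with k hk
    have hδ : δ (k + 1) = 2 ^ (k + 2) * δ k := by
      simp only [δ, twoPowTriangle_succ (k + 1), mul_nsmul']
      exact_mod_cast AddCircle.norm_nsmul_eq_of_mul_norm_le (by push_cast; rw [abs_one]; linarith)
    rw [hδ]
    exact mul_le_mul_of_nonneg_right (le_self_pow₀ one_le_two (by omega)) (norm_nonneg _)
  filter_upwards [eventually_nonpos_of_two_mul_le hbdd hgrow] with k hk
  exact norm_le_zero_iff.1 hk

/-- for `a n = 2 ^ (n (n+1) / 2)`, the subgroup `t^s_{(d n)}(𝕋)` is countable. -/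
theorem statChar_two_pow_countable :
    (statChar (fun n => (dSeq (fun n => 2 ^ (n * (n + 1) / 2)) n : ℤ))).Countable := by
  refine (AddCircle.countable_setOf_isOfFinAddOrder (1 : ℝ)).mono fun x hx => ?_
  obtain ⟨k, hk⟩ := (eventually_twoPowTriangle_nsmul_eq_zero hx).exists
  exact isOfFinAddOrder_iff_nsmul_eq_zero.2 ⟨_, isArithSeq_twoPowTriangle.pos_s16 (k + 1), hk⟩
end
end
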